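/- Two vertices (m,b) and (n,c) of Λ lie in the same connected component of Λ if and only if either there exist j,k ∈ ℕ with m − j = n − k and σ^j(b) = σ^k(c), or both b and c lie in the image of ℤ under the canonical ring homomorphism ℤ → ℤ₂. Here σ : ℤ₂ → ℤ₂ is the digit shift σ(a) = (a − r)/2 where r ∈ {0,1} and a ≡ r mod 2. -/

import Mathlib

open MeasureTheory Filter Topology
open scoped ENNReal Classical

noncomputable instance : MeasurableSpace ℤ_[2] := borel ℤ_[2]
instance : BorelSpace ℤ_[2] := ⟨rfl⟩

/-- The dyadic lattice graph `Λ` on vertex set `ℤ × ℤ₂`. -/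
def Lambda : SimpleGraph (ℤ × ℤ_[2]) where
  Adj u v :=
    (u.1 = v.1 ∧ (v.2 = u.2 + 1 ∨ v.2 = u.2 - 1)) ∨
    (v.1 = u.1 + 1 ∧ v.2 = 2 * u.2) ∨ (u.1 = v.1 + 1 ∧ u.2 = 2 * v.2)
  symm := by
    constructor
    rintro ⟨m, b⟩ ⟨n, c⟩ (⟨h1, h2 | h2⟩ | ⟨h1, h2⟩ | ⟨h1, h2⟩)
    · exact Or.inl ⟨h1.symm, Or.inr (by rw [h2]; ring)⟩
    · exact Or.inl ⟨h1.symm, Or.inl (by rw [h2]; ring)⟩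
    · exact Or.inr (Or.inr ⟨h1, h2⟩)
    · exact Or.inr (Or.inl ⟨h1, h2⟩)
  loopless := by
    constructor
    rintro ⟨m, b⟩ (⟨h1, h2 | h2⟩ | ⟨h1, h2⟩ | ⟨h1, h2⟩)
    · exact one_ne_zero (by linear_combination -h2)
    · exact one_ne_zero (by linear_combination h2)
    · omega
    · omega

/-- The degree (3 or 4) of a vertex of `Λ`. -/
noncomputable def lamDeg (u : ℤ × ℤ_[2]) : ℕ := if (2 : ℤ_[2]) ∣ u.2 then 4 else 3

/-- `X` is a simple random walk on `Λ`, defined on `(Ω, P)`, started at `v₀`. -/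
def IsWalkL {Ω : Type} [MeasurableSpace Ω] (P : Measure Ω) (X : ℕ → Ω → ℤ × ℤ_[2])
    (v₀ : ℤ × ℤ_[2]) : Prop :=
  (∀ t, Measurable (X t)) ∧ P {ω | X 0 ω = v₀} = 1 ∧
    ∀ t (u w : ℤ × ℤ_[2]),
      P {ω | X (t + 1) ω = w ∧ X t ω = u} =
        if Lambda.Adj u w then P {ω | X t ω = u} / (lamDeg u : ℝ≥0∞) else 0
/-- The unique `c` with `2 * c = a`, when `2 ∣ a` (and `0` otherwise). -/
noncomputable def half (a : ℤ_[2]) : ℤ_[2] :=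
  if h : (2 : ℤ_[2]) ∣ a then h.choose else 0

/-- The digit shift `σ` on `ℤ₂`: `σ a = (a - r)/2` where `a ≡ r mod 2`, `r ∈ {0,1}`. -/
noncomputable def shift (a : ℤ_[2]) : ℤ_[2] :=
  half (a - if (2 : ℤ_[2]) ∣ a then 0 else 1)


lemma two_prime : Prime (2 : ℤ_[2]) := by
  have := PadicInt.prime_p (p := 2)
  simpa using this

lemma two_nz : (2 : ℤ_[2]) ≠ 0 := two_prime.ne_zero

lemma parity (a : ℤ_[2]) : (2 : ℤ_[2]) ∣ a ∨ (2 : ℤ_[2]) ∣ (a - 1) := by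
  have h := PadicInt.appr_spec 1 a
  rw [Ideal.mem_span_singleton, pow_one] at h
  have h2 : ((2 : ℕ) : ℤ_[2]) = 2 := by norm_num
  rw [h2] at h
  rcases Nat.even_or_odd (PadicInt.appr a 1) with ⟨t, ht⟩ | ⟨t, ht⟩
  · left
    have he : a = (a - PadicInt.appr a 1) + 2 * (t : ℤ_[2]) := by
      rw [ht]; push_cast; ring
    rw [he]
    exact dvd_add h ⟨t, rfl⟩
  · right
    have he : a - 1 = (a - PadicInt.appr a 1) + 2 * (t : ℤ_[2]) := by
      rw [ht]; push_cast; ring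
    rw [he]
    exact dvd_add h ⟨t, rfl⟩

lemma half_spec {a : ℤ_[2]} (h : (2 : ℤ_[2]) ∣ a) : 2 * half a = a := by
  rw [half, dif_pos h]; exact h.choose_spec.symm

lemma half_two_mul (b : ℤ_[2]) : half (2 * b) = b :=
  mul_left_cancel₀ two_nz (half_spec ⟨b, rfl⟩)

lemma shift_two_mul (b : ℤ_[2]) : shift (2 * b) = b := by
  have h : (if (2:ℤ_[2]) ∣ 2*b then (0:ℤ_[2]) else 1) = 0 := if_pos (dvd_mul_right 2 b)
  rw [shift, h, sub_zero, half_two_mul]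

lemma not_two_dvd_odd (b : ℤ_[2]) : ¬ (2 : ℤ_[2]) ∣ (2 * b + 1) := by
  intro h
  exact two_prime.not_dvd_one ((dvd_add_right ⟨b, rfl⟩).mp h)

lemma shift_two_mul_add_one (b : ℤ_[2]) : shift (2 * b + 1) = b := by
  have h : (if (2:ℤ_[2]) ∣ 2*b+1 then (0:ℤ_[2]) else 1) = 1 := if_neg (not_two_dvd_odd b)
  rw [shift, h, add_sub_cancel_right, half_two_mul]

lemma shift_decomp (a : ℤ_[2]) : a = 2 * shift a ∨ a = 2 * shift a + 1 := by
  rcases parity a with h | h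
  · left
    have h' : (if (2:ℤ_[2]) ∣ a then (0:ℤ_[2]) else 1) = 0 := if_pos h
    rw [shift, h', sub_zero]; exact (half_spec h).symm
  · right
    have h2 : ¬ (2 : ℤ_[2]) ∣ a := fun h' =>
      two_prime.not_dvd_one ((dvd_sub_right h').mp h)
    have h' : (if (2:ℤ_[2]) ∣ a then (0:ℤ_[2]) else 1) = 1 := if_neg h2
    rw [shift, h']
    linear_combination -half_spec h

lemma shift_int (z : ℤ) : ∃ w : ℤ, shift ((z : ℤ_[2])) = (w : ℤ_[2]) := by
  rcases Int.even_or_odd z with ⟨t, ht⟩ | ⟨t, ht⟩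
  · refine ⟨t, ?_⟩
    have : ((z : ℤ_[2])) = 2 * (t : ℤ_[2]) := by rw [ht]; push_cast; ring
    rw [this, shift_two_mul]
  · refine ⟨t, ?_⟩
    have : ((z : ℤ_[2])) = 2 * (t : ℤ_[2]) + 1 := by rw [ht]; push_cast; ring
    rw [this, shift_two_mul_add_one]

lemma shift_mem_range {b : ℤ_[2]} (h : b ∈ Set.range (Int.cast : ℤ → ℤ_[2])) :
    shift b ∈ Set.range (Int.cast : ℤ → ℤ_[2]) := by
  obtain ⟨z, rfl⟩ := h
  obtain ⟨w, hw⟩ := shift_int z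
  exact ⟨w, hw.symm⟩

lemma shift_iter_mem_range {b : ℤ_[2]} (j : ℕ) (h : b ∈ Set.range (Int.cast : ℤ → ℤ_[2])) :
    shift^[j] b ∈ Set.range (Int.cast : ℤ → ℤ_[2]) := by
  induction j with
  | zero => exact h
  | succ j ih => rw [Function.iterate_succ_apply']; exact shift_mem_range ih

lemma mem_range_of_shift {b : ℤ_[2]} (h : shift b ∈ Set.range (Int.cast : ℤ → ℤ_[2])) :
    b ∈ Set.range (Int.cast : ℤ → ℤ_[2]) := by
  obtain ⟨w, hw⟩ := h
  rcases shift_decomp b with hd | hd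
  · exact ⟨2 * w, by rw [hd, ← hw]; push_cast; ring⟩
  · exact ⟨2 * w + 1, by rw [hd, ← hw]; push_cast; ring⟩

lemma mem_range_of_shift_iter (j : ℕ) : ∀ {b : ℤ_[2]},
    shift^[j] b ∈ Set.range (Int.cast : ℤ → ℤ_[2]) → b ∈ Set.range (Int.cast : ℤ → ℤ_[2]) := by
  induction j with
  | zero => intro b h; exact h
  | succ j ih =>
    intro b h
    rw [Function.iterate_succ_apply] at h
    exact mem_range_of_shift (ih h)

lemma shift_iter_pow (v : ℕ) (u : ℤ_[2]) : shift^[v] (2 ^ v * u) = u := by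
  induction v with
  | zero => simp
  | succ v ih =>
    rw [Function.iterate_succ_apply]
    have h2 : (2:ℤ_[2]) ^ (v+1) * u = 2 * (2 ^ v * u) := by ring
    rw [h2, shift_two_mul, ih]

lemma shift_iter_pow_sub_one (v : ℕ) (u : ℤ_[2]) : shift^[v] (2 ^ v * u - 1) = u - 1 := by
  induction v with
  | zero => simp
  | succ v ih =>
    rw [Function.iterate_succ_apply]
    have h2 : (2:ℤ_[2]) ^ (v+1) * u - 1 = 2 * (2 ^ v * u - 1) + 1 := by ring
    rw [h2, shift_two_mul_add_one, ih]

lemma shift_odd_eq {u : ℤ_[2]} (hu : ¬ (2:ℤ_[2]) ∣ u) : shift u = shift (u - 1) := by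
  have hd : (2:ℤ_[2]) ∣ (u - 1) := (parity u).resolve_left hu
  have h1 : (if (2:ℤ_[2]) ∣ u then (0:ℤ_[2]) else 1) = 1 := if_neg hu
  have h2 : (if (2:ℤ_[2]) ∣ (u-1) then (0:ℤ_[2]) else 1) = 0 := if_pos hd
  rw [shift, shift, h1, h2, sub_zero]

lemma carry (b : ℤ_[2]) : (∃ j : ℕ, shift^[j] (b + 1) = shift^[j] b) ∨ b = -1 := by
  by_cases hb : b = -1
  · exact Or.inr hb
  left
  have hne : b + 1 ≠ 0 := fun h => hb (by linear_combination h)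
  obtain ⟨v, u, hu, heq⟩ := WfDvdMonoid.max_power_factor hne two_prime.irreducible
  refine ⟨v + 1, ?_⟩
  have hb' : b = 2 ^ v * u - 1 := by linear_combination heq
  rw [Function.iterate_succ_apply', Function.iterate_succ_apply', heq, hb',
    shift_iter_pow, shift_iter_pow_sub_one]
  exact shift_odd_eq hu

lemma adj_vert (m : ℤ) (b : ℤ_[2]) : Lambda.Adj (m, b) (m, b + 1) := Or.inl ⟨rfl, Or.inl rfl⟩
lemma adj_vert' (m : ℤ) (b : ℤ_[2]) : Lambda.Adj (m, b) (m, b - 1) := Or.inl ⟨rfl, Or.inr rfl⟩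
lemma adj_horiz (m : ℤ) (b : ℤ_[2]) : Lambda.Adj (m, b) (m + 1, 2 * b) :=
  Or.inr (Or.inl ⟨rfl, rfl⟩)

lemma reach_shift (n : ℤ) (c : ℤ_[2]) : Lambda.Reachable (n, c) (n - 1, shift c) := by
  rcases shift_decomp c with hd | hd
  · have h : Lambda.Adj (n - 1, shift c) (n, c) :=
      Or.inr (Or.inl ⟨by ring, hd⟩)
    exact h.reachable.symm
  · have h1 : Lambda.Adj (n, c) (n, c - 1) := adj_vert' n c
    have h2 : Lambda.Adj (n - 1, shift c) (n, c - 1) :=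
      Or.inr (Or.inl ⟨by ring, by linear_combination hd⟩)
    exact h1.reachable.trans h2.reachable.symm

lemma reach_shift_iter (n : ℤ) (c : ℤ_[2]) (k : ℕ) :
    Lambda.Reachable (n, c) (n - k, shift^[k] c) := by
  induction k with
  | zero => simpa using SimpleGraph.Reachable.refl (n, c)
  | succ k ih =>
    have h := reach_shift (n - k) (shift^[k] c)
    have he : ((n - k - 1 : ℤ), shift (shift^[k] c)) = ((n - (k+1 : ℕ) : ℤ), shift^[k+1] c) := by
      rw [Function.iterate_succ_apply']
      have h1 : (n - (k:ℤ) - 1 : ℤ) = n - ((k+1 : ℕ) : ℤ) := by push_cast; ring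
      rw [h1]
    rw [he] at h
    exact ih.trans h

lemma reach_int (m : ℤ) (z : ℤ) : Lambda.Reachable (m, (z : ℤ_[2])) (m, (0 : ℤ_[2])) := by
  induction z using Int.induction_on with
  | zero => simpa using SimpleGraph.Reachable.refl (m, (0 : ℤ_[2]))
  | succ i ih =>
    have h : Lambda.Adj (m, ((i : ℤ) : ℤ_[2])) (m, ((i + 1 : ℤ) : ℤ_[2])) := by
      have := adj_vert m ((i : ℤ) : ℤ_[2])
      rwa [show ((i : ℤ) : ℤ_[2]) + 1 = ((i + 1 : ℤ) : ℤ_[2]) by push_cast; ring] at this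
    exact h.reachable.symm.trans ih
  | pred i ih =>
    have h : Lambda.Adj (m, ((-i : ℤ) : ℤ_[2])) (m, ((-i - 1 : ℤ) : ℤ_[2])) := by
      have := adj_vert' m ((-i : ℤ) : ℤ_[2])
      rwa [show ((-i : ℤ) : ℤ_[2]) - 1 = ((-i - 1 : ℤ) : ℤ_[2]) by push_cast; ring] at this
    exact h.reachable.symm.trans ih

lemma adj_step (k : ℤ) : Lambda.Adj (k, (0 : ℤ_[2])) (k + 1, (0 : ℤ_[2])) := by
  have := adj_horiz k (0 : ℤ_[2])
  rwa [mul_zero] at this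

lemma reach_zero (m n : ℤ) :
    Lambda.Reachable (m, (0 : ℤ_[2])) (n, (0 : ℤ_[2])) := by
  suffices h : ∀ k : ℤ, Lambda.Reachable ((0 : ℤ), (0 : ℤ_[2])) (k, (0 : ℤ_[2])) by
    exact (h m).symm.trans (h n)
  intro k
  induction k using Int.induction_on with
  | zero => exact SimpleGraph.Reachable.refl _
  | succ i ih => exact ih.trans (adj_step i).reachable
  | pred i ih =>
    have h := adj_step (-i - 1)
    rw [show (-i - 1 + 1 : ℤ) = -i by ring] at h
    exact ih.trans h.reachable.symm

def RelR (u v : ℤ × ℤ_[2]) : Prop :=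
  (∃ j k : ℕ, u.1 - j = v.1 - k ∧ shift^[j] u.2 = shift^[k] v.2) ∨
  (u.2 ∈ Set.range (Int.cast : ℤ → ℤ_[2]) ∧ v.2 ∈ Set.range (Int.cast : ℤ → ℤ_[2]))

lemma RelR_refl (u : ℤ × ℤ_[2]) : RelR u u := Or.inl ⟨0, 0, rfl, rfl⟩

lemma RelR_trans {u v w : ℤ × ℤ_[2]} (h1 : RelR u v) (h2 : RelR v w) : RelR u w := by
  rcases h1 with ⟨j, k, ha, hb⟩ | ⟨hu, hv⟩
  · rcases h2 with ⟨j', k', hc, hd⟩ | ⟨hv, hw⟩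
    · set s := max k j' with hs
      have hk : k ≤ s := le_max_left _ _
      have hj' : j' ≤ s := le_max_right _ _
      refine Or.inl ⟨(s - k) + j, (s - j') + k', by omega, ?_⟩
      calc shift^[(s - k) + j] u.2
          = shift^[s - k] (shift^[j] u.2) := Function.iterate_add_apply _ _ _ _
        _ = shift^[s - k] (shift^[k] v.2) := by rw [hb]
        _ = shift^[(s - k) + k] v.2 := (Function.iterate_add_apply _ _ _ _).symm
        _ = shift^[s] v.2 := by rw [Nat.sub_add_cancel hk]
        _ = shift^[(s - j') + j'] v.2 := by rw [Nat.sub_add_cancel hj']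
        _ = shift^[s - j'] (shift^[j'] v.2) := Function.iterate_add_apply _ _ _ _
        _ = shift^[s - j'] (shift^[k'] w.2) := by rw [hd]
        _ = shift^[(s - j') + k'] w.2 := (Function.iterate_add_apply _ _ _ _).symm
    · refine Or.inr ⟨?_, hw⟩
      refine mem_range_of_shift_iter j ?_
      rw [hb]
      exact shift_iter_mem_range k hv
  · rcases h2 with ⟨j', k', hc, hd⟩ | ⟨hv', hw⟩
    · refine Or.inr ⟨hu, ?_⟩
      refine mem_range_of_shift_iter k' ?_
      rw [← hd]
      exact shift_iter_mem_range j' hv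
    · exact Or.inr ⟨hu, hw⟩

lemma RelR_of_adj {u v : ℤ × ℤ_[2]} (h : Lambda.Adj u v) : RelR u v := by
  obtain ⟨m, b⟩ := u
  obtain ⟨n, c⟩ := v
  rcases h with ⟨h1, h2 | h2⟩ | ⟨h1, h2⟩ | ⟨h1, h2⟩
  · -- c = b + 1
    rcases carry b with ⟨j, hj⟩ | rfl
    · exact Or.inl ⟨j, j, by rw [h1], by rw [h2, hj]⟩
    · refine Or.inr ⟨⟨-1, by push_cast; ring⟩, ⟨0, by rw [h2]; push_cast; ring⟩⟩
  · -- c = b - 1, so b = c + 1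
    have hb : b = c + 1 := by linear_combination -h2
    rcases carry c with ⟨j, hj⟩ | rfl
    · exact Or.inl ⟨j, j, by rw [h1], by rw [hb, hj]⟩
    · refine Or.inr ⟨⟨0, by rw [hb]; push_cast; ring⟩, ⟨-1, by push_cast; ring⟩⟩
  · -- n = m + 1, c = 2 * b
    refine Or.inl ⟨0, 1, by omega, ?_⟩
    simp only [Function.iterate_one, Function.iterate_zero_apply]
    rw [show c = 2 * b from h2, shift_two_mul]
  · -- m = n + 1, b = 2 * c
    refine Or.inl ⟨1, 0, by omega, ?_⟩
    simp only [Function.iterate_one, Function.iterate_zero_apply]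
    rw [show b = 2 * c from h2, shift_two_mul]

lemma RelR_of_reachable {u v : ℤ × ℤ_[2]} (h : Lambda.Reachable u v) : RelR u v := by
  obtain ⟨w⟩ := h
  induction w with
  | nil => exact RelR_refl _
  | cons h p ih => exact RelR_trans (RelR_of_adj h) ih

theorem lambda_reachable_iff (m n : ℤ) (b c : ℤ_[2]) :
    Lambda.Reachable (m, b) (n, c) ↔
      (∃ j k : ℕ, m - j = n - k ∧ shift^[j] b = shift^[k] c) ∨
      (b ∈ Set.range (Int.cast : ℤ → ℤ_[2]) ∧ c ∈ Set.range (Int.cast : ℤ → ℤ_[2])) := by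
  constructor
  · exact fun h => RelR_of_reachable h
  · rintro (⟨j, k, h1, h2⟩ | ⟨⟨zb, hzb⟩, ⟨zc, hzc⟩⟩)
    · have r1 := reach_shift_iter m b j
      have r2 := reach_shift_iter n c k
      have he : ((m - j : ℤ), shift^[j] b) = ((n - k : ℤ), shift^[k] c) := by
        rw [h1, h2]
      rw [he] at r1
      exact r1.trans r2.symm
    · rw [← hzb, ← hzc]
      exact (reach_int m zb).trans ((reach_zero m n).trans (reach_int n zc).symm)
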